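/- Let T be a t-norm that is general pseudo-homogeneous for F. If F(x,1)=x for all x∈[0,1], then T=min. -/

import Mathlib

open Set Filter Topology

def IsTnorm (T : ℝ → ℝ → ℝ) : Prop :=
  (∀ x ∈ Set.Icc (0:ℝ) 1, ∀ y ∈ Set.Icc (0:ℝ) 1, T x y ∈ Set.Icc (0:ℝ) 1) ∧
  (∀ x ∈ Set.Icc (0:ℝ) 1, ∀ y ∈ Set.Icc (0:ℝ) 1, T x y = T y x) ∧
  (∀ x ∈ Set.Icc (0:ℝ) 1, ∀ y ∈ Set.Icc (0:ℝ) 1, ∀ z ∈ Set.Icc (0:ℝ) 1,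
      T x (T y z) = T (T x y) z) ∧
  (∀ x ∈ Set.Icc (0:ℝ) 1, ∀ y ∈ Set.Icc (0:ℝ) 1, ∀ z ∈ Set.Icc (0:ℝ) 1,
      y ≤ z → T x y ≤ T x z) ∧
  (∀ x ∈ Set.Icc (0:ℝ) 1, T x 1 = x)

def IsGPH (T F : ℝ → ℝ → ℝ) : Prop :=
  ∀ lam ∈ Set.Icc (0:ℝ) 1, ∀ x ∈ Set.Icc (0:ℝ) 1, ∀ y ∈ Set.Icc (0:ℝ) 1,
    T (lam * x) (lam * y) = F lam (T x y)

noncomputable def TD : ℝ → ℝ → ℝ := fun x y => if max x y = 1 then min x y else 0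

/-! Putting `x = y = 1` in pseudo-homogeneity gives `T(λ, λ) = F(λ, 1) = λ`, and an idempotent
t-norm is `min`: for `x ≤ y`, `x = T(x, x) ≤ T(x, y) ≤ T(x, 1) = x`. -/

theorem IsGPH.apply_self_self {T F : ℝ → ℝ → ℝ} (h : IsGPH T F) (h11 : T 1 1 = 1)
    (hb : ∀ x ∈ Set.Icc (0:ℝ) 1, F x 1 = x) {a : ℝ} (ha : a ∈ Set.Icc (0:ℝ) 1) :
    T a a = a := by
  have h1 : (1:ℝ) ∈ Set.Icc (0:ℝ) 1 := ⟨zero_le_one, le_rfl⟩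
  simpa [h11, hb a ha] using h a ha 1 h1 1 h1

namespace IsTnorm

variable {T : ℝ → ℝ → ℝ}

theorem apply_eq_left_of_le (hT : IsTnorm T) (hidem : ∀ a ∈ Set.Icc (0:ℝ) 1, T a a = a)
    {x y : ℝ} (hx : x ∈ Set.Icc (0:ℝ) 1) (hy : y ∈ Set.Icc (0:ℝ) 1) (hxy : x ≤ y) :
    T x y = x := by
  obtain ⟨-, -, -, hmono, hunit⟩ := hT
  have h1 : (1:ℝ) ∈ Set.Icc (0:ℝ) 1 := ⟨zero_le_one, le_rfl⟩
  apply le_antisymm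
  · calc T x y ≤ T x 1 := hmono x hx y hy 1 h1 hy.2
      _ = x := hunit x hx
  · calc x = T x x := (hidem x hx).symm
      _ ≤ T x y := hmono x hx x hx y hy hxy

theorem eq_min_of_idempotent (hT : IsTnorm T) (hidem : ∀ a ∈ Set.Icc (0:ℝ) 1, T a a = a)
    {x y : ℝ} (hx : x ∈ Set.Icc (0:ℝ) 1) (hy : y ∈ Set.Icc (0:ℝ) 1) :
    T x y = min x y := by
  rcases le_total x y with hxy | hyx
  · rw [min_eq_left hxy, hT.apply_eq_left_of_le hidem hx hy hxy]
  · rw [min_eq_right hyx, hT.2.1 x hx y hy, hT.apply_eq_left_of_le hidem hy hx hyx]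

end IsTnorm

theorem F_boundary_implies_min (T F : ℝ → ℝ → ℝ) (hT : IsTnorm T) (h : IsGPH T F)
    (hb : ∀ x ∈ Set.Icc (0:ℝ) 1, F x 1 = x) :
    ∀ x ∈ Set.Icc (0:ℝ) 1, ∀ y ∈ Set.Icc (0:ℝ) 1, T x y = min x y := by
  have h11 : T 1 1 = 1 := hT.2.2.2.2 1 ⟨zero_le_one, le_rfl⟩
  intro x hx y hy
  exact hT.eq_min_of_idempotent (fun a ha => h.apply_self_self h11 hb ha) hx hy
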